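/- arXiv:2201.06803 — 3 statements merged into one kernel-verified Lean document; each statement's English description precedes it below -/
import Mathlib

section
/- Let H be a Hilbert space, 𝒮 : ℝ≥0 → (H →L H) a strongly continuous semigroup, Π⁻¹ : H → H' a bounded map, and suppose there exist a dense subspace D ⊆ H, a constant ω > 0, and a non-negative quantity q(x) ≥ 0 such that for all x ∈ D and 0 ≤ σ ≤ t: ⟨𝒮(σ)x, Π⁻¹𝒮(σ)x⟩ ≥ ⟨𝒮(t)x, Π⁻¹𝒮(t)x⟩ + ω∫_σ^t ⟨𝒮(s)x, Π⁻¹𝒮(s)x⟩ds, where moreover a‖y‖² ≤ ⟨y,Π⁻¹y⟩ ≤ b‖y‖² for all y ∈ H with 0 < a ≤ b. Then ‖𝒮(t)x‖² ≤ (b/a) e^{-ωt}‖x‖² for all t ≥ 0 and x ∈ H. -/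
/-!
Along a trajectory starting in `D`, the Lyapunov function `V(s) = ⟪S s x, Pinv (S s x)⟫` is
nonnegative, hence nonincreasing by the dissipation inequality, so `∫ σ..u V ≥ (u - σ) V(u)`
and `V(u) (1 + ω (u - σ)) ≤ V(σ)`. Chaining this over `n` steps of length `t / n` gives
`V(t) (1 + ω t / n)ⁿ ≤ V(0)`, and letting `n → ∞` gives `V(t) ≤ e^{-ωt} V(0)`. The bounds
`a ‖y‖² ≤ ⟪y, Pinv y⟫ ≤ b ‖y‖²` turn this into the estimate on `D`, which extends to `H` by density.
-/

open MeasureTheory Filter Topology Set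
open scoped RealInnerProductSpace

def LyapunovDissipative (ω : ℝ) (f : ℝ → ℝ) : Prop :=
  ∀ σ t : ℝ, 0 ≤ σ → σ ≤ t → f t + ω * (∫ s in σ..t, f s) ≤ f σ

theorem mul_pow_le_of_mul_le_shift {f : ℝ → ℝ} {h ρ : ℝ} (hh : 0 ≤ h) (hρ : 0 ≤ ρ)
    (hstep : ∀ σ, 0 ≤ σ → f (σ + h) * ρ ≤ f σ) (k : ℕ) :
    f (k * h) * ρ ^ k ≤ f 0 := by
  induction k with
  | zero => simp
  | succ k ih =>
    calc f ((k + 1 : ℕ) * h) * ρ ^ (k + 1)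
        = f (k * h + h) * ρ * ρ ^ k := by push_cast; ring_nf
      _ ≤ f (k * h) * ρ ^ k :=
          mul_le_mul_of_nonneg_right (hstep _ (by positivity)) (pow_nonneg hρ k)
      _ ≤ f 0 := ih

namespace LyapunovDissipative

variable {ω : ℝ} {f : ℝ → ℝ}

theorem antitoneOn (hdiss : LyapunovDissipative ω f) (hω : 0 ≤ ω)
    (hf : ∀ s, 0 ≤ s → 0 ≤ f s) : AntitoneOn f (Ici 0) := by
  intro σ hσ u _ hσu
  have hint : 0 ≤ ∫ s in σ..u, f s :=
    intervalIntegral.integral_nonneg hσu fun s hs => hf s (le_trans hσ hs.1)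
  nlinarith [hdiss σ u hσ hσu, mul_nonneg hω hint]

theorem mul_one_add_le (hdiss : LyapunovDissipative ω f) (hω : 0 ≤ ω)
    (hf : ∀ s, 0 ≤ s → 0 ≤ f s) (hcont : ContinuousOn f (Ici 0))
    {σ u : ℝ} (hσ : 0 ≤ σ) (hσu : σ ≤ u) :
    f u * (1 + ω * (u - σ)) ≤ f σ := by
  have hint : (u - σ) * f u ≤ ∫ s in σ..u, f s := by
    rw [← smul_eq_mul, ← intervalIntegral.integral_const]
    refine intervalIntegral.integral_mono_on hσu intervalIntegrable_const
      ((hcont.mono fun s hs => le_trans hσ hs.1).intervalIntegrable_of_Icc hσu) fun s hs => ?_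
    exact hdiss.antitoneOn hω hf (le_trans hσ hs.1) (le_trans hσ hσu) hs.2
  nlinarith [hdiss σ u hσ hσu, mul_le_mul_of_nonneg_left hint hω]

theorem le_exp_mul (hdiss : LyapunovDissipative ω f) (hω : 0 ≤ ω)
    (hf : ∀ s, 0 ≤ s → 0 ≤ f s) (hcont : ContinuousOn f (Ici 0)) {t : ℝ} (ht : 0 ≤ t) :
    f t ≤ Real.exp (-ω * t) * f 0 := by
  have hsteps : ∀ n : ℕ, 0 < n → f t * (1 + ω * t / n) ^ n ≤ f 0 := by
    intro n hn
    have hh : 0 ≤ t / n := by positivity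
    have hchain := mul_pow_le_of_mul_le_shift hh (by positivity : 0 ≤ 1 + ω * (t / n))
      (fun σ hσ => by
        simpa using hdiss.mul_one_add_le hω hf hcont hσ (le_add_of_nonneg_right hh)) n
    rwa [mul_div_cancel₀ _ (by positivity : (n : ℝ) ≠ 0), ← mul_div_assoc] at hchain
  have hlim : f t * Real.exp (ω * t) ≤ f 0 :=
    le_of_tendsto ((Real.tendsto_one_add_div_pow_exp (ω * t)).const_mul (f t))
      ((eventually_gt_atTop 0).mono hsteps)
  calc f t = Real.exp (-ω * t) * (f t * Real.exp (ω * t)) := by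
        rw [mul_left_comm, ← Real.exp_add]; simp
    _ ≤ Real.exp (-ω * t) * f 0 := mul_le_mul_of_nonneg_left hlim (Real.exp_pos _).le

end LyapunovDissipative

theorem semigroup_decay_from_lyapunov_general
    {H : Type*} [NormedAddCommGroup H] [InnerProductSpace ℝ H]
    (S : ℝ → H →L[ℝ] H) (Pinv : H →L[ℝ] H)
    (hS0 : S 0 = 1)
    (hScont : ∀ x : H, Continuous fun t => S t x)
    (D : Submodule ℝ H) (hdense : Dense (D : Set H))
    (ω : ℝ) (hω : 0 < ω)
    (a b : ℝ) (ha : 0 < a)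
    (hlower : ∀ y : H, a * ‖y‖ ^ 2 ≤ ⟪y, Pinv y⟫)
    (hupper : ∀ y : H, ⟪y, Pinv y⟫ ≤ b * ‖y‖ ^ 2)
    (hdiss : ∀ x ∈ D, ∀ σ t : ℝ, 0 ≤ σ → σ ≤ t →
      ⟪S t x, Pinv (S t x)⟫ + ω * (∫ s in σ..t, ⟪S s x, Pinv (S s x)⟫)
        ≤ ⟪S σ x, Pinv (S σ x)⟫) :
    ∀ t : ℝ, 0 ≤ t → ∀ x : H,
      ‖S t x‖ ^ 2 ≤ (b / a) * Real.exp (-ω * t) * ‖x‖ ^ 2 := by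
  intro t ht
  have hdecay : ∀ x ∈ D, a * ‖S t x‖ ^ 2 ≤ Real.exp (-ω * t) * (b * ‖x‖ ^ 2) := by
    intro x hx
    have hV : LyapunovDissipative ω fun s => ⟪S s x, Pinv (S s x)⟫ := hdiss x hx
    have hV_nonneg : ∀ s, 0 ≤ s → 0 ≤ ⟪S s x, Pinv (S s x)⟫ :=
      fun s _ => (by positivity : 0 ≤ a * ‖S s x‖ ^ 2).trans (hlower _)
    have hV_cont : Continuous fun s => ⟪S s x, Pinv (S s x)⟫ :=
      (hScont x).inner (Pinv.continuous.comp (hScont x))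
    calc a * ‖S t x‖ ^ 2 ≤ ⟪S t x, Pinv (S t x)⟫ := hlower _
      _ ≤ Real.exp (-ω * t) * ⟪x, Pinv x⟫ := by
          simpa [hS0] using hV.le_exp_mul hω.le hV_nonneg hV_cont.continuousOn ht
      _ ≤ Real.exp (-ω * t) * (b * ‖x‖ ^ 2) :=
          mul_le_mul_of_nonneg_left (hupper x) (Real.exp_pos _).le
  refine hdense.induction (fun x hx => ?_) (isClosed_le (by fun_prop) (by fun_prop))
  rw [div_mul_eq_mul_div, div_mul_eq_mul_div, le_div_iff₀ ha]
  linarith [hdecay x hx]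

/-- exponential decay of the semigroup from the Lyapunov dissipation inequality. -/
theorem semigroup_decay_from_lyapunov
    {H : Type*} [NormedAddCommGroup H] [InnerProductSpace ℝ H] [CompleteSpace H]
    (S : ℝ → H →L[ℝ] H) (Pinv : H →L[ℝ] H)
    (hS0 : S 0 = 1)
    (hSadd : ∀ t s : ℝ, 0 ≤ t → 0 ≤ s → S (t + s) = (S t).comp (S s))
    (hScont : ∀ x : H, Continuous fun t => S t x)
    (D : Submodule ℝ H) (hdense : Dense (D : Set H))
    (ω : ℝ) (hω : 0 < ω)
    (q : H → ℝ) (hq : ∀ x : H, 0 ≤ q x)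
    (a b : ℝ) (ha : 0 < a) (hab : a ≤ b)
    (hlower : ∀ y : H, a * ‖y‖ ^ 2 ≤ ⟪y, Pinv y⟫)
    (hupper : ∀ y : H, ⟪y, Pinv y⟫ ≤ b * ‖y‖ ^ 2)
    (hdiss : ∀ x ∈ D, ∀ σ t : ℝ, 0 ≤ σ → σ ≤ t →
      ⟪S t x, Pinv (S t x)⟫ + ω * (∫ s in σ..t, ⟪S s x, Pinv (S s x)⟫)
        ≤ ⟪S σ x, Pinv (S σ x)⟫) :
    ∀ t : ℝ, 0 ≤ t → ∀ x : H,
      ‖S t x‖ ^ 2 ≤ (b / a) * Real.exp (-ω * t) * ‖x‖ ^ 2 :=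
  semigroup_decay_from_lyapunov_general S Pinv hS0 hScont D hdense ω hω a b ha hlower hupper hdiss
end

section
/- Let 𝒱 : ℝ → (H' →L H') be a strongly continuous group with generator Δ (domain D(Δ)), S* : ℝ → (H' →L H') a strongly continuous group, M : H' →L H' bounded, γ > 0, and φ ∈ D(Δ). Define w(t) := ∫₀ᵗ S*(s−t) M 𝒱(s)φ ds for t ∈ [−γ,γ]. Then, if A* denotes the generator of s ↦ S*(s), w(t) ∈ D(A*) and A* w(t) = M𝒱(t)φ − S*(−t)Mφ − ∫₀ᵗ S*(s−t) M 𝒱(s) Δφ ds for each t ∈ [−γ,γ]. -/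
/-!
With `w(t) = ∫₀ᵗ S(s-t) M V(s) φ ds`, the semigroup law gives
`S(h) w(t) = ∫₀ᵗ S(s+h-t) M V(s) φ ds`, and writing `V(s) φ = V(s+h) φ - V(s) (V(h) φ - φ)` yields
`S(h) w(t) - w(t) = (∫ₕ^{t+h} f - ∫₀ᵗ f) - ∫₀ᵗ S(s+h-t) M V(s) (V(h) φ - φ) ds`
for `f(s) = S(s-t) M V(s) φ`. After division by `h`, the first bracket tends to `f(t) - f(0)` by
the fundamental theorem of calculus, and the last integral tends to `∫₀ᵗ S(s-t) M V(s) Δφ ds`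
because, by Banach–Steinhaus, `(h, ψ) ↦ ∫₀ᵗ S(s+h-t) M V(s) ψ ds` is jointly continuous.
-/

open MeasureTheory Filter Topology

section StrongContinuity

variable {X Y 𝕜 E F : Type*} [TopologicalSpace X] [TopologicalSpace Y]
  [NontriviallyNormedField 𝕜] [NormedAddCommGroup E] [NormedSpace 𝕜 E] [CompleteSpace E]
  [NormedAddCommGroup F] [NormedSpace 𝕜 F]

theorem IsCompact.exists_bound_opNorm_of_continuousOn_apply {K : Set X} (hK : IsCompact K)
    {S : X → E →L[𝕜] F} (hS : ∀ x, ContinuousOn (fun t => S t x) K) :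
    ∃ C, ∀ t ∈ K, ‖S t‖ ≤ C := by
  obtain ⟨C, hC⟩ := banach_steinhaus (g := fun t : K => S t) fun x => by
    obtain ⟨B, hB⟩ := hK.exists_bound_of_continuousOn (hS x)
    exact ⟨B, fun t => hB t t.2⟩
  exact ⟨C, fun t ht => hC ⟨t, ht⟩⟩

theorem continuous_uncurry_of_continuous_apply [WeaklyLocallyCompactSpace X]
    {S : X → E →L[𝕜] F} (hS : ∀ x, Continuous fun t => S t x) :
    Continuous fun p : X × E => S p.1 p.2 := by
  refine continuous_iff_continuousAt.2 fun ⟨t₀, x₀⟩ => ?_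
  obtain ⟨K, hK, hKt₀⟩ := exists_compact_mem_nhds t₀
  obtain ⟨C, hC⟩ := hK.exists_bound_opNorm_of_continuousOn_apply fun x => (hS x).continuousOn
  have h_near : Tendsto (fun p : X × E => S p.1 (p.2 - x₀)) (𝓝 (t₀, x₀)) (𝓝 0) := by
    refine squeeze_zero_norm' (a := fun p => C * ‖p.2 - x₀‖) ?_
      ((continuous_const.mul (continuous_snd.sub continuous_const).norm).tendsto' _ _ (by simp))
    filter_upwards [continuous_fst.continuousAt.preimage_mem_nhds hKt₀] with p hp
    exact (S p.1).le_of_opNorm_le (hC _ hp) _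
  have h_far : Tendsto (fun p : X × E => S p.1 x₀) (𝓝 (t₀, x₀)) (𝓝 (S t₀ x₀)) :=
    ((hS x₀).comp continuous_fst).continuousAt
  simpa [ContinuousAt] using h_near.add h_far

theorem Continuous.apply_of_continuous_apply [WeaklyLocallyCompactSpace X]
    {S : X → E →L[𝕜] F} (hS : ∀ x, Continuous fun t => S t x) {g : Y → X} {x : Y → E}
    (hg : Continuous g) (hx : Continuous x) : Continuous fun y => S (g y) (x y) :=
  (continuous_uncurry_of_continuous_apply hS).comp (hg.prodMk hx)

end StrongContinuity

theorem hasDerivAt_intervalIntegral_comp_add_right {E : Type*} [NormedAddCommGroup E]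
    [NormedSpace ℝ E] [CompleteSpace E] {f : ℝ → E} (hf : Continuous f) (a b x : ℝ) :
    HasDerivAt (fun h => ∫ s in a..b, f (s + h)) (f (b + x) - f (a + x)) x := by
  have hF : ∀ y, HasDerivAt (fun u => ∫ s in (0 : ℝ)..u, f s) (f y) y := fun y =>
    (hf.integral_hasStrictDerivAt 0 y).hasDerivAt
  have := ((hF (b + x)).comp_const_add b x).sub ((hF (a + x)).comp_const_add a x)
  refine this.congr_of_eventuallyEq (Eventually.of_forall fun h => ?_)
  beta_reduce
  rw [Pi.sub_apply, intervalIntegral.integral_comp_add_right f h,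
    intervalIntegral.integral_interval_sub_left (hf.intervalIntegrable _ _)
      (hf.intervalIntegrable _ _)]

section Duhamel

variable {E F : Type*} [NormedAddCommGroup E] [NormedSpace ℝ E] [NormedAddCommGroup F]
  [NormedSpace ℝ F] {S : ℝ → F →L[ℝ] F} {V : ℝ → E →L[ℝ] E} {M : E →L[ℝ] F}

variable (S V M) in
/-- The paper's `w(t)` is `duhamelIntegral S V M t 0 φ`; for a semigroup `S`, shifting `r` amounts
to applying `S r` (`apply_duhamelIntegral`). -/
noncomputable def duhamelIntegral (t r : ℝ) (ψ : E) : F :=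
  ∫ s in (0 : ℝ)..t, S (r + (s - t)) (M (V s ψ))

theorem duhamelIntegral_zero (t : ℝ) (ψ : E) :
    duhamelIntegral S V M t 0 ψ = ∫ s in (0 : ℝ)..t, S (s - t) (M (V s ψ)) := by
  simp only [duhamelIntegral, zero_add]

theorem duhamelIntegral_smul (t r c : ℝ) (ψ : E) :
    duhamelIntegral S V M t r (c • ψ) = c • duhamelIntegral S V M t r ψ := by
  simp only [duhamelIntegral, map_smul, intervalIntegral.integral_smul]

theorem duhamelIntegral_apply_self (hVadd : ∀ t s, V (t + s) = (V t).comp (V s))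
    (t h : ℝ) (ψ : E) :
    duhamelIntegral S V M t h (V h ψ) = ∫ s in (0 : ℝ)..t, S (s + h - t) (M (V (s + h) ψ)) := by
  rw [duhamelIntegral]
  congr 1 with s
  rw [hVadd, show h + (s - t) = s + h - t by ring]
  rfl

variable [CompleteSpace E] [CompleteSpace F]

theorem continuous_duhamelIntegrand (hS : ∀ x, Continuous fun t => S t x)
    (hV : ∀ x, Continuous fun t => V t x) (t : ℝ) :
    Continuous fun q : (ℝ × E) × ℝ => S (q.1.1 + (q.2 - t)) (M (V q.2 q.1.2)) :=
  Continuous.apply_of_continuous_apply hS (by fun_prop) <| M.continuous.comp <|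
    Continuous.apply_of_continuous_apply hV continuous_snd (continuous_snd.comp continuous_fst)

theorem continuous_duhamelIntegral (hS : ∀ x, Continuous fun t => S t x)
    (hV : ∀ x, Continuous fun t => V t x) (t : ℝ) :
    Continuous fun p : ℝ × E => duhamelIntegral S V M t p.1 p.2 :=
  intervalIntegral.continuous_parametric_intervalIntegral_of_continuous'
    (continuous_duhamelIntegrand hS hV t) 0 t

theorem intervalIntegrable_duhamelIntegrand (hS : ∀ x, Continuous fun t => S t x)
    (hV : ∀ x, Continuous fun t => V t x) (t r : ℝ) (ψ : E) :
    IntervalIntegrable (fun s => S (r + (s - t)) (M (V s ψ))) volume 0 t :=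
  ((continuous_duhamelIntegrand (M := M) hS hV t).comp
    (continuous_const (y := (r, ψ)).prodMk continuous_id)).intervalIntegrable 0 t

theorem duhamelIntegral_sub (hS : ∀ x, Continuous fun t => S t x)
    (hV : ∀ x, Continuous fun t => V t x) (t r : ℝ) (ψ₁ ψ₂ : E) :
    duhamelIntegral S V M t r (ψ₁ - ψ₂)
      = duhamelIntegral S V M t r ψ₁ - duhamelIntegral S V M t r ψ₂ := by
  simp only [duhamelIntegral, map_sub, intervalIntegral.integral_sub
    (intervalIntegrable_duhamelIntegrand hS hV t r ψ₁)
    (intervalIntegrable_duhamelIntegrand hS hV t r ψ₂)]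

theorem apply_duhamelIntegral (hSadd : ∀ t s, S (t + s) = (S t).comp (S s))
    (hS : ∀ x, Continuous fun t => S t x) (hV : ∀ x, Continuous fun t => V t x)
    (t h r : ℝ) (ψ : E) :
    S h (duhamelIntegral S V M t r ψ) = duhamelIntegral S V M t (h + r) ψ := by
  rw [duhamelIntegral,
    ← (S h).intervalIntegral_comp_comm (intervalIntegrable_duhamelIntegrand hS hV t r ψ)]
  congr 1 with s
  rw [add_assoc, hSadd h]
  rfl

theorem smul_sub_duhamelIntegral (hSadd : ∀ t s, S (t + s) = (S t).comp (S s))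
    (hS : ∀ x, Continuous fun t => S t x) (hV : ∀ x, Continuous fun t => V t x)
    (t h : ℝ) (ψ : E) :
    h⁻¹ • (S h (duhamelIntegral S V M t 0 ψ) - duhamelIntegral S V M t 0 ψ)
      = h⁻¹ • (duhamelIntegral S V M t h (V h ψ) - duhamelIntegral S V M t 0 ψ)
        - duhamelIntegral S V M t h (h⁻¹ • (V h ψ - ψ)) := by
  rw [apply_duhamelIntegral hSadd hS hV, add_zero, duhamelIntegral_smul,
    duhamelIntegral_sub hS hV]
  simp only [smul_sub]
  abel

theorem tendsto_smul_sub_duhamelIntegral (hS0 : S 0 = 1)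
    (hSadd : ∀ t s, S (t + s) = (S t).comp (S s)) (hS : ∀ x, Continuous fun t => S t x)
    (hV0 : V 0 = 1) (hVadd : ∀ t s, V (t + s) = (V t).comp (V s))
    (hV : ∀ x, Continuous fun t => V t x) {ψ y : E}
    (hψ : Tendsto (fun h : ℝ => h⁻¹ • (V h ψ - ψ)) (𝓝[>] 0) (𝓝 y)) (t : ℝ) :
    Tendsto (fun h : ℝ => h⁻¹ • (S h (duhamelIntegral S V M t 0 ψ) - duhamelIntegral S V M t 0 ψ))
      (𝓝[>] 0) (𝓝 (M (V t ψ) - S (-t) (M ψ) - duhamelIntegral S V M t 0 y)) := by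
  set f : ℝ → F := fun s => S (s - t) (M (V s ψ))
  have hf : Continuous f := Continuous.apply_of_continuous_apply hS
    (continuous_id.sub continuous_const) (M.continuous.comp (hV ψ))
  have h_shift : Tendsto
      (fun h : ℝ => h⁻¹ • (duhamelIntegral S V M t h (V h ψ) - duhamelIntegral S V M t 0 ψ))
      (𝓝[>] 0) (𝓝 (f t - f 0)) := by
    simpa [duhamelIntegral_apply_self hVadd, duhamelIntegral_zero, f] using
      (hasDerivAt_intervalIntegral_comp_add_right hf 0 t 0).tendsto_slope_zero_right
  have h_gen : Tendsto (fun h : ℝ => duhamelIntegral S V M t h (h⁻¹ • (V h ψ - ψ)))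
      (𝓝[>] 0) (𝓝 (duhamelIntegral S V M t 0 y)) :=
    ((continuous_duhamelIntegral hS hV t).tendsto (0, y)).comp
      ((tendsto_id.mono_left nhdsWithin_le_nhds).prodMk_nhds hψ)
  have hft : f t = M (V t ψ) := by simp [f, hS0]
  have hf0 : f 0 = S (-t) (M ψ) := by simp [f, hV0]
  rw [← hft, ← hf0]
  exact (h_shift.sub h_gen).congr fun h => (smul_sub_duhamelIntegral hSadd hS hV t h ψ).symm

end Duhamel

theorem w_in_domain_and_formula_general
    {E : Type*} [NormedAddCommGroup E] [NormedSpace ℝ E] [CompleteSpace E]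
    (S Vg : ℝ → E →L[ℝ] E) (M : E →L[ℝ] E)
    (A Δ : E →ₗ[ℝ] E) (domA domΔ : Submodule ℝ E)
    (hS0 : S 0 = 1) (hSadd : ∀ t s : ℝ, S (t + s) = (S t).comp (S s))
    (hScont : ∀ x : E, Continuous fun t => S t x)
    (hV0 : Vg 0 = 1) (hVadd : ∀ t s : ℝ, Vg (t + s) = (Vg t).comp (Vg s))
    (hVcont : ∀ x : E, Continuous fun t => Vg t x)
    (hgenS : ∀ x ∈ domA,
      Tendsto (fun h : ℝ => h⁻¹ • (S h x - x)) (𝓝[>] 0) (𝓝 (A x)))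
    (hdomA : ∀ x : E,
      (∃ y : E, Tendsto (fun h : ℝ => h⁻¹ • (S h x - x)) (𝓝[>] 0) (𝓝 y)) → x ∈ domA)
    (hgenV : ∀ x ∈ domΔ,
      Tendsto (fun h : ℝ => h⁻¹ • (Vg h x - x)) (𝓝[>] 0) (𝓝 (Δ x)))
    (γ : ℝ) (φ : E) (hφ : φ ∈ domΔ) :
    ∀ t ∈ Set.Icc (-γ) γ,
      (∫ s in (0:ℝ)..t, S (s - t) (M (Vg s φ))) ∈ domA ∧
      A (∫ s in (0:ℝ)..t, S (s - t) (M (Vg s φ)))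
        = M (Vg t φ) - S (-t) (M φ)
          - ∫ s in (0:ℝ)..t, S (s - t) (M (Vg s (Δ φ))) := by
  intro t _
  have h_slope := tendsto_smul_sub_duhamelIntegral (M := M) hS0 hSadd hScont hV0 hVadd hVcont
    (hgenV φ hφ) t
  simp only [duhamelIntegral_zero] at h_slope
  have hw := hdomA _ ⟨_, h_slope⟩
  exact ⟨hw, tendsto_nhds_unique (hgenS _ hw) h_slope⟩

/-- w(t) = ∫₀ᵗ S(s−t) M 𝒱(s)φ ds lies in D(A*) with an explicit formula for A*w(t). -/
theorem w_in_domain_and_formula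
    {E : Type*} [NormedAddCommGroup E] [NormedSpace ℝ E] [CompleteSpace E]
    (S Vg : ℝ → E →L[ℝ] E) (M : E →L[ℝ] E)
    (A Δ : E →ₗ[ℝ] E) (domA domΔ : Submodule ℝ E)
    (hS0 : S 0 = 1) (hSadd : ∀ t s : ℝ, S (t + s) = (S t).comp (S s))
    (hScont : ∀ x : E, Continuous fun t => S t x)
    (hV0 : Vg 0 = 1) (hVadd : ∀ t s : ℝ, Vg (t + s) = (Vg t).comp (Vg s))
    (hVcont : ∀ x : E, Continuous fun t => Vg t x)
    (hgenS : ∀ x ∈ domA,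
      Tendsto (fun h : ℝ => h⁻¹ • (S h x - x)) (𝓝[>] 0) (𝓝 (A x)))
    (hdomA : ∀ x : E,
      (∃ y : E, Tendsto (fun h : ℝ => h⁻¹ • (S h x - x)) (𝓝[>] 0) (𝓝 y)) → x ∈ domA)
    (hgenV : ∀ x ∈ domΔ,
      Tendsto (fun h : ℝ => h⁻¹ • (Vg h x - x)) (𝓝[>] 0) (𝓝 (Δ x)))
    (γ : ℝ) (hγ : 0 < γ) (φ : E) (hφ : φ ∈ domΔ) :
    ∀ t ∈ Set.Icc (-γ) γ,
      (∫ s in (0:ℝ)..t, S (s - t) (M (Vg s φ))) ∈ domA ∧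
      A (∫ s in (0:ℝ)..t, S (s - t) (M (Vg s φ)))
        = M (Vg t φ) - S (-t) (M φ)
          - ∫ s in (0:ℝ)..t, S (s - t) (M (Vg s (Δ φ))) :=
  w_in_domain_and_formula_general S Vg M A Δ domA domΔ hS0 hSadd hScont hV0 hVadd hVcont hgenS hdomA
    hgenV γ φ hφ
end

section
/- Suppose the system (with generator 𝒜 of semigroup 𝒮 on H, feedback K ∈ L(D(𝒜);U)) is stabilizable with rate θ: ‖𝒮(t)‖ ≤ C₁e^{−θt}, 𝒜x = (Ã + BK)x on D(𝒜), and ‖K𝒮(·)x‖_{L²(ℝ≥0;U)} ≤ D₁‖x‖. Assume also that for x ∈ D(𝒜) and φ ∈ D(A*): ⟨𝒮(t)x,φ⟩ − ⟨x,S*(t)φ⟩ = ∫₀ᵗ⟨K𝒮(s)x, B*S*(t−s)φ⟩ds. Then for all t > 0 and φ ∈ D(A*): ‖S*(t)φ‖² ≤ 2D₁²∫₀ᵗ‖B*S*(s)φ‖²ds + 2C₁² e^{−2θt}‖φ‖². -/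
/-!
Pairing the duality identity with `x` in the dense domain writes `⟪x, S t φ⟫` as a boundary
term, bounded by the decay of `T`, minus a convolution integral, bounded by Cauchy–Schwarz once
`s ↦ t - s` reverses time in the observation. The resulting bound `|⟪x, S t φ⟫| ≤ M ‖x‖` extends
from the dense domain to all of `E`, so `‖S t φ‖ ≤ M`, and `(a + b)² ≤ 2a² + 2b²` finishes.
-/

open MeasureTheory Filter Topology
open scoped RealInnerProductSpace

section

variable {E : Type*} [NormedAddCommGroup E] [InnerProductSpace ℝ E]

theorem norm_le_of_dense_abs_inner_le {D : Set E} (hD : Dense D) {y : E} {M : ℝ} (hM : 0 ≤ M)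
    (h : ∀ x ∈ D, |⟪x, y⟫| ≤ M * ‖x‖) : ‖y‖ ≤ M := by
  have hall : ∀ x, |⟪x, y⟫| ≤ M * ‖x‖ :=
    hD.induction h (isClosed_le (by fun_prop) (by fun_prop))
  rw [← innerSL_apply_norm ℝ y]
  exact (innerSL ℝ y).opNorm_le_bound hM fun x => by
    simpa [real_inner_comm] using hall x

end

section

variable {α F : Type*} [MeasurableSpace α] {μ : Measure α} [NormedAddCommGroup F]

theorem memLp_norm_two_of_integrable_sq_norm {f : α → F}
    (hf : Integrable (fun a => ‖f a‖ ^ 2) μ) : MemLp (fun a => ‖f a‖) 2 μ := by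
  have hmeas : AEStronglyMeasurable (fun a => ‖f a‖) μ := by
    simpa only [Real.sqrt_sq (norm_nonneg _)] using
      Real.continuous_sqrt.comp_aestronglyMeasurable hf.aestronglyMeasurable
  exact (memLp_two_iff_integrable_sq hmeas).2 hf

theorem abs_integral_inner_le_sqrt_mul_sqrt [InnerProductSpace ℝ F] {f g : α → F}
    (hf : Integrable (fun a => ‖f a‖ ^ 2) μ) (hg : Integrable (fun a => ‖g a‖ ^ 2) μ) :
    |∫ a, ⟪f a, g a⟫ ∂μ| ≤ √(∫ a, ‖f a‖ ^ 2 ∂μ) * √(∫ a, ‖g a‖ ^ 2 ∂μ) := by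
  have hf2 := memLp_norm_two_of_integrable_sq_norm hf
  have hg2 := memLp_norm_two_of_integrable_sq_norm hg
  have hholder := integral_mul_le_Lp_mul_Lq_of_nonneg Real.HolderConjugate.two_two
    (Eventually.of_forall fun a => norm_nonneg (f a))
    (Eventually.of_forall fun a => norm_nonneg (g a)) (by simpa using hf2) (by simpa using hg2)
  simp only [Real.rpow_ofNat, ← Real.sqrt_eq_rpow] at hholder
  calc |∫ a, ⟪f a, g a⟫ ∂μ|
      ≤ ∫ a, ‖f a‖ * ‖g a‖ ∂μ := by
        rw [← Real.norm_eq_abs]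
        exact norm_integral_le_of_norm_le (hf2.integrable_mul hg2)
          (Eventually.of_forall fun a => abs_real_inner_le_norm _ _)
    _ ≤ _ := hholder

theorem abs_intervalIntegral_inner_comp_sub_le [InnerProductSpace ℝ F] {f g : ℝ → F} {t : ℝ}
    (ht : 0 ≤ t) (hf : IntervalIntegrable (fun s => ‖f s‖ ^ 2) volume 0 t)
    (hg : IntervalIntegrable (fun s => ‖g s‖ ^ 2) volume 0 t) :
    |∫ s in 0..t, ⟪f s, g (t - s)⟫| ≤
      √(∫ s in 0..t, ‖f s‖ ^ 2) * √(∫ s in 0..t, ‖g s‖ ^ 2) := by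
  have hg' : IntervalIntegrable (fun s => ‖g (t - s)‖ ^ 2) volume 0 t := by
    simpa using hg.symm.comp_sub_left t
  have hrev : ∫ s in 0..t, ‖g s‖ ^ 2 = ∫ s in 0..t, ‖g (t - s)‖ ^ 2 := by
    simp [intervalIntegral.integral_comp_sub_left fun s => ‖g s‖ ^ 2]
  simp only [hrev, intervalIntegral.integral_of_le ht]
  exact abs_integral_inner_le_sqrt_mul_sqrt hf.1 hg'.1

theorem sqrt_intervalIntegral_sq_norm_le {f : ℝ → F} {t c : ℝ} (ht : 0 ≤ t)
    (hf : IntegrableOn (fun s => ‖f s‖ ^ 2) (Set.Ioi 0))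
    (hc : ∫ s in Set.Ioi 0, ‖f s‖ ^ 2 ≤ c ^ 2) :
    √(∫ s in 0..t, ‖f s‖ ^ 2) ≤ |c| := by
  rw [← Real.sqrt_sq_eq_abs, intervalIntegral.integral_of_le ht]
  refine Real.sqrt_le_sqrt (le_trans ?_ hc)
  exact setIntegral_mono_set hf (ae_of_all _ fun s => by positivity)
    Set.Ioc_subset_Ioi_self.eventuallyLE

end

theorem stabilizable_implies_weak_obs_general
    {E F : Type*} [NormedAddCommGroup E] [InnerProductSpace ℝ E]
    [NormedAddCommGroup F] [InnerProductSpace ℝ F]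
    (T S : ℝ → E →L[ℝ] E) (K : E → F) (obs : ℝ → E → F)
    (DA Dcal : Submodule ℝ E) (hdense : Dense (Dcal : Set E))
    (θ C₁ D₁ : ℝ)
    (hdecay : ∀ t : ℝ, 0 ≤ t → ‖T t‖ ≤ C₁ * Real.exp (-θ * t))
    (hKint : ∀ x ∈ Dcal, IntegrableOn (fun s => ‖K (T s x)‖ ^ 2) (Set.Ioi 0))
    (hK : ∀ x ∈ Dcal, (∫ s in Set.Ioi (0:ℝ), ‖K (T s x)‖ ^ 2) ≤ D₁ ^ 2 * ‖x‖ ^ 2)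
    (hobsint : ∀ φ ∈ DA, ∀ a b : ℝ,
      IntervalIntegrable (fun s => ‖obs s φ‖ ^ 2) volume a b)
    (hdual : ∀ x ∈ Dcal, ∀ φ ∈ DA, ∀ t : ℝ, 0 ≤ t →
      ⟪T t x, φ⟫ - ⟪x, S t φ⟫
        = ∫ s in (0:ℝ)..t, ⟪K (T s x), obs (t - s) φ⟫) :
    ∀ t > (0:ℝ), ∀ φ ∈ DA,
      ‖S t φ‖ ^ 2 ≤ 2 * D₁ ^ 2 * (∫ s in (0:ℝ)..t, ‖obs s φ‖ ^ 2)
        + 2 * C₁ ^ 2 * Real.exp (-2 * θ * t) * ‖φ‖ ^ 2 := by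
  intro t ht φ hφ
  have hC₁ : 0 ≤ C₁ := by simpa using (norm_nonneg _).trans (hdecay 0 le_rfl)
  set I := ∫ s in (0:ℝ)..t, ‖obs s φ‖ ^ 2
  have hI : 0 ≤ I := intervalIntegral.integral_nonneg ht.le fun s _ => by positivity
  set M := |D₁| * √I + C₁ * Real.exp (-θ * t) * ‖φ‖
  have hbound : ∀ x ∈ Dcal, |⟪x, S t φ⟫| ≤ M * ‖x‖ := by
    intro x hx
    have hTt : |⟪T t x, φ⟫| ≤ C₁ * Real.exp (-θ * t) * ‖x‖ * ‖φ‖ :=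
      (abs_real_inner_le_norm _ _).trans <| mul_le_mul_of_nonneg_right
        ((T t).le_of_opNorm_le (hdecay t ht.le) x) (norm_nonneg φ)
    have hKx : √(∫ s in (0:ℝ)..t, ‖K (T s x)‖ ^ 2) ≤ |D₁ * ‖x‖| :=
      sqrt_intervalIntegral_sq_norm_le ht.le (hKint x hx) (by simpa [mul_pow] using hK x hx)
    have hconv := abs_intervalIntegral_inner_comp_sub_le ht.le
      ((intervalIntegrable_iff_integrableOn_Ioc_of_le ht.le).2
        ((hKint x hx).mono_set Set.Ioc_subset_Ioi_self)) (hobsint φ hφ 0 t)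
    calc |⟪x, S t φ⟫|
        = |⟪T t x, φ⟫ - ∫ s in (0:ℝ)..t, ⟪K (T s x), obs (t - s) φ⟫| := by
          rw [← hdual x hx φ hφ t ht.le, sub_sub_cancel]
      _ ≤ |⟪T t x, φ⟫| + |∫ s in (0:ℝ)..t, ⟪K (T s x), obs (t - s) φ⟫| := abs_sub _ _
      _ ≤ C₁ * Real.exp (-θ * t) * ‖x‖ * ‖φ‖ + |D₁ * ‖x‖| * √I :=
          add_le_add hTt (hconv.trans (mul_le_mul_of_nonneg_right hKx (Real.sqrt_nonneg _)))
      _ = M * ‖x‖ := by rw [abs_mul, abs_norm]; ring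
  have hnorm := norm_le_of_dense_abs_inner_le hdense (by positivity) hbound
  calc ‖S t φ‖ ^ 2 ≤ M ^ 2 := pow_le_pow_left₀ (norm_nonneg _) hnorm 2
    _ ≤ 2 * ((|D₁| * √I) ^ 2 + (C₁ * Real.exp (-θ * t) * ‖φ‖) ^ 2) := add_sq_le
    _ = _ := by
      rw [mul_pow, sq_abs, Real.sq_sqrt hI, mul_pow, mul_pow, ← Real.exp_nat_mul]
      ring_nf

/-- stabilizability with rate θ implies the weak observability inequality with 2θ. -/
theorem stabilizable_implies_weak_obs
    {E F : Type*} [NormedAddCommGroup E] [InnerProductSpace ℝ E] [CompleteSpace E]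
    [NormedAddCommGroup F] [InnerProductSpace ℝ F] [CompleteSpace F]
    (T S : ℝ → E →L[ℝ] E) (K : E → F) (obs : ℝ → E → F)
    (DA Dcal : Submodule ℝ E) (hdense : Dense (Dcal : Set E))
    (θ C₁ D₁ : ℝ) (hθ : 0 < θ) (hC₁ : 1 ≤ C₁) (hD₁ : 0 ≤ D₁)
    (hdecay : ∀ t : ℝ, 0 ≤ t → ‖T t‖ ≤ C₁ * Real.exp (-θ * t))
    (hKmeas : ∀ x ∈ Dcal, AEStronglyMeasurable (fun s => K (T s x)) volume)
    (hKint : ∀ x ∈ Dcal, IntegrableOn (fun s => ‖K (T s x)‖ ^ 2) (Set.Ioi 0))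
    (hK : ∀ x ∈ Dcal, (∫ s in Set.Ioi (0:ℝ), ‖K (T s x)‖ ^ 2) ≤ D₁ ^ 2 * ‖x‖ ^ 2)
    (hobsmeas : ∀ φ ∈ DA, AEStronglyMeasurable (fun s => obs s φ) volume)
    (hobsint : ∀ φ ∈ DA, ∀ a b : ℝ,
      IntervalIntegrable (fun s => ‖obs s φ‖ ^ 2) volume a b)
    (hdual : ∀ x ∈ Dcal, ∀ φ ∈ DA, ∀ t : ℝ, 0 ≤ t →
      ⟪T t x, φ⟫ - ⟪x, S t φ⟫
        = ∫ s in (0:ℝ)..t, ⟪K (T s x), obs (t - s) φ⟫) :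
    ∀ t > (0:ℝ), ∀ φ ∈ DA,
      ‖S t φ‖ ^ 2 ≤ 2 * D₁ ^ 2 * (∫ s in (0:ℝ)..t, ‖obs s φ‖ ^ 2)
        + 2 * C₁ ^ 2 * Real.exp (-2 * θ * t) * ‖φ‖ ^ 2 :=
  stabilizable_implies_weak_obs_general T S K obs DA Dcal hdense θ C₁ D₁ hdecay hKint hK hobsint
    hdual
end
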